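/- arXiv:2402.03633 — 4 statements merged into one kernel-verified Lean document; each statement's English description precedes it below -/
import Mathlib

section
/- (Gilbert–Varshamov bound, parity-check form.) Let q be a prime power, δ ∈ (0, 1 − 1/q), ε ∈ (0, 1 − H_q(δ)), and n a positive integer, and set ℓ = ⌈(H_q(δ) + ε)·n⌉. Then the probability, over a uniformly random matrix H ∈ F_q^{ℓ×n}, that there exists a nonzero vector x ∈ F_q^n with Hamming weight wt(x) < δn and H·x = 0, is at most q^{−εn}. Equivalently, H is a parity-check matrix of a q-ary linear code of minimum distance at least δn with probability at least 1 − q^{−εn}. -/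
/-- The `q`-ary entropy function
`H_q(x) = x·log_q(q−1) − x·log_q(x) − (1−x)·log_q(1−x)`. -/
noncomputable def qaryEntropy (q : ℕ) (x : ℝ) : ℝ :=
  x * Real.logb q ((q : ℝ) - 1) - x * Real.logb q x - (1 - x) * Real.logb q (1 - x)

open Finset in
/-- Cardinality of the kernel of the nonzero functional `h ↦ h ⬝ᵥ x`. -/
lemma GV.ker_card (F : Type) [Field F] [Fintype F] [DecidableEq F] (n : ℕ)
    (x : Fin n → F) (hx : x ≠ 0) :
    Nat.card {h : Fin n → F // dotProduct h x = 0} * Fintype.card F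
      = Fintype.card F ^ n := by
  classical
  obtain ⟨j, hj⟩ : ∃ j, x j ≠ 0 := by
    by_contra h; push_neg at h; exact hx (funext h)
  let f : (Fin n → F) →ₗ[F] F :=
    { toFun := fun h => dotProduct h x
      map_add' := fun a b => add_dotProduct a b x
      map_smul' := fun c a => smul_dotProduct c a x }
  have hsurj : Function.Surjective f := by
    intro c
    refine ⟨fun k => if k = j then c * (x j)⁻¹ else 0, ?_⟩
    simp [f, dotProduct, Finset.sum_ite_eq', mul_assoc, inv_mul_cancel₀ hj]
  have h1 : Nat.card (Fin n → F)
      = Nat.card (LinearMap.ker f) * Nat.card ((Fin n → F) ⧸ LinearMap.ker f) :=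
    Submodule.card_eq_card_quotient_mul_card _
  have h2 : Nat.card ((Fin n → F) ⧸ LinearMap.ker f) = Fintype.card F := by
    rw [Nat.card_congr f.quotKerEquivRange.toEquiv, LinearMap.range_eq_top.mpr hsurj]
    rw [Nat.card_congr (Submodule.topEquiv : (⊤ : Submodule F F) ≃ₗ[F] F).toEquiv, Nat.card_eq_fintype_card]
  have h3 : Nat.card {h : Fin n → F // dotProduct h x = 0}
      = Nat.card (LinearMap.ker f) := by
    exact Nat.card_congr (Equiv.subtypeEquivRight (fun h => by
      simp [f, LinearMap.mem_ker]))
  rw [h2] at h1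
  rw [h3, ← h1, Nat.card_eq_fintype_card]
  simp

lemma GV.matrix_card (F : Type) [Field F] [Fintype F] [DecidableEq F] (ℓ n : ℕ)
    (x : Fin n → F) (hx : x ≠ 0) :
    Nat.card {H : Matrix (Fin ℓ) (Fin n) F // H.mulVec x = 0} * Fintype.card F ^ ℓ
      = Fintype.card F ^ (ℓ * n) := by
  classical
  have e1 : {H : Matrix (Fin ℓ) (Fin n) F // H.mulVec x = 0}
      ≃ (Fin ℓ → {h : Fin n → F // dotProduct h x = 0}) := by
    exact
      { toFun := fun H i => ⟨H.1 i, congrFun H.2 i⟩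
        invFun := fun g => ⟨Matrix.of (fun i j => (g i).1 j), funext fun i => (g i).2⟩
        left_inv := fun H => rfl
        right_inv := fun g => rfl }
  rw [Nat.card_congr e1, Nat.card_pi, Finset.prod_const, Finset.card_univ, Fintype.card_fin,
    ← mul_pow, GV.ker_card F n x hx, ← pow_mul, mul_comm n ℓ]

open Finset in
lemma GV.volume_bound (F : Type) [Field F] [Fintype F] [DecidableEq F]
    (q : ℕ) (hq : q = Fintype.card F) (δ : ℝ) (hδ0 : 0 < δ) (hδq : δ < 1 - 1/(q:ℝ))
    (n : ℕ) :
    (Nat.card {x : Fin n → F // x ≠ 0 ∧ (hammingNorm x : ℝ) < δ * n} : ℝ)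
      ≤ (q : ℝ) ^ (qaryEntropy q δ * n) := by
  classical
  have hq2 : 1 < q := hq ▸ Fintype.one_lt_card
  have hq1 : (1:ℝ) < (q:ℝ) := by exact_mod_cast hq2
  have hq0 : (0:ℝ) < (q:ℝ) := by linarith
  have hqm1 : (0:ℝ) < (q:ℝ) - 1 := by linarith
  have hδ1 : δ < 1 := by
    have : (0:ℝ) < 1/(q:ℝ) := by positivity
    linarith
  set a : ℝ := δ / ((q:ℝ) - 1) with ha_def
  set b : ℝ := 1 - δ with hb_def
  have ha : 0 < a := div_pos hδ0 hqm1
  have hb : 0 < b := by simp only [hb_def]; linarith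
  have hab : a ≤ b := by
    rw [ha_def, hb_def, div_le_iff₀ hqm1]
    have h1 : δ * (q:ℝ) < (q:ℝ) - 1 := by
      have := mul_lt_mul_of_pos_right hδq hq0
      calc δ * (q:ℝ) < (1 - 1/(q:ℝ)) * q := this
        _ = (q:ℝ) - 1 := by field_simp
    nlinarith
  set E : ℝ := qaryEntropy q δ with hE_def
  -- key rpow identity
  have hlogq : Real.log (q:ℝ) ≠ 0 := by
    have := Real.log_pos hq1; linarith
  have key : (q:ℝ) ^ (-(E * n)) = a ^ (δ * n) * b ^ ((1 - δ) * n) := by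
    have h1 : (0:ℝ) < (q:ℝ) ^ (-(E * n)) := Real.rpow_pos_of_pos hq0 _
    have h2 : (0:ℝ) < a ^ (δ * n) * b ^ ((1 - δ) * n) :=
      mul_pos (Real.rpow_pos_of_pos ha _) (Real.rpow_pos_of_pos hb _)
    apply Real.log_injOn_pos (Set.mem_Ioi.mpr h1) (Set.mem_Ioi.mpr h2)
    rw [Real.log_rpow hq0, Real.log_mul (ne_of_gt (Real.rpow_pos_of_pos ha _))
      (ne_of_gt (Real.rpow_pos_of_pos hb _)), Real.log_rpow ha, Real.log_rpow hb]
    have hEq : E * Real.log (q:ℝ)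
        = δ * Real.log ((q:ℝ) - 1) - δ * Real.log δ - (1 - δ) * Real.log (1 - δ) := by
      rw [hE_def]
      unfold qaryEntropy
      rw [Real.logb, Real.logb, Real.logb]
      field_simp
    have hloga : Real.log a = Real.log δ - Real.log ((q:ℝ) - 1) :=
      Real.log_div (ne_of_gt hδ0) (ne_of_gt hqm1)
    have : -(E * ↑n) * Real.log ↑q = -(E * Real.log (q:ℝ)) * n := by ring
    rw [this, hEq, hloga, hb_def]
    ring
  -- the weight function
  set w : F → ℝ := fun c => if c = 0 then b else a with hw_def
  -- per-coordinate product formula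
  have hprod : ∀ x : Fin n → F,
      (∏ j, w (x j)) = b ^ (n - hammingNorm x) * a ^ (hammingNorm x) := by
    intro x
    rw [Finset.prod_ite (fun _ => b) (fun _ => a), Finset.prod_const, Finset.prod_const]
    have h2 : (univ.filter fun j => ¬ x j = 0).card = hammingNorm x := by
      simp [hammingNorm]
    have h1 : (univ.filter fun j => x j = 0).card = n - hammingNorm x := by
      have he : (univ.filter fun j => x j = 0) = (univ.filter fun j => ¬ x j = 0)ᶜ := by
        ext j; simp
      rw [he, Finset.card_compl, h2]
      simp
    rw [h1, h2]
  -- total sum is 1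
  have hsum1 : ∑ x : Fin n → F, ∏ j, w (x j) = 1 := by
    rw [← Fintype.piFinset_univ, ← Finset.prod_univ_sum]
    have hsw : ∑ c : F, w c = 1 := by
      rw [← Finset.add_sum_erase _ w (Finset.mem_univ (0:F))]
      have : ∀ c ∈ univ.erase (0:F), w c = a := by
        intro c hc
        simp only [hw_def]
        rw [if_neg (Finset.ne_of_mem_erase hc)]
      rw [Finset.sum_congr rfl this, Finset.sum_const, Finset.card_erase_of_mem (Finset.mem_univ _),
        Finset.card_univ, ← hq]
      have hcast : ((q - 1 : ℕ) : ℝ) = (q:ℝ) - 1 := by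
        rw [Nat.cast_sub (le_of_lt hq2)]; simp
      simp only [nsmul_eq_mul, hcast, hw_def, if_pos rfl]
      rw [ha_def, mul_div_cancel₀ _ (ne_of_gt hqm1), hb_def]
      ring
    rw [Finset.prod_congr rfl (fun j _ => hsw)]
    simp
  -- per-x lower bound
  have hperx : ∀ x : Fin n → F, (hammingNorm x : ℝ) ≤ δ * n →
      (q:ℝ) ^ (-(E * n)) ≤ ∏ j, w (x j) := by
    intro x hx
    have hwn : hammingNorm x ≤ n := by
      simpa using (hammingNorm_le_card_fintype (x := x))
    rw [hprod x, key]
    set i : ℕ := hammingNorm x with hi_def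
    have hcast : ((n - i : ℕ) : ℝ) = (n:ℝ) - i := by
      rw [Nat.cast_sub hwn]
    rw [← Real.rpow_natCast b (n - i), ← Real.rpow_natCast a i, hcast]
    have hsplit : a ^ (δ * n) * b ^ ((1 - δ) * n)
        = (b ^ ((n:ℝ) - i) * a ^ (i:ℝ)) * (a / b) ^ (δ * n - i) := by
      have h1 : a ^ (δ * n) = a ^ (i:ℝ) * a ^ (δ * n - i) := by
        rw [← Real.rpow_add ha]; congr 1; ring
      have h2 : b ^ ((1 - δ) * n) = b ^ ((n:ℝ) - i) * b ^ (-(δ * n - (i:ℝ))) := by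
        rw [← Real.rpow_add hb]; congr 1; ring
      have h3 : (a / b) ^ (δ * n - (i:ℝ)) = a ^ (δ * n - (i:ℝ)) * b ^ (-(δ * n - (i:ℝ))) := by
        rw [div_eq_mul_inv, Real.mul_rpow (le_of_lt ha) (by positivity),
          Real.inv_rpow (le_of_lt hb), ← Real.rpow_neg (le_of_lt hb)]
      rw [h1, h2, h3]; ring
    rw [hsplit]
    have hle1 : (a / b) ^ (δ * n - i) ≤ 1 :=
      Real.rpow_le_one (le_of_lt (div_pos ha hb)) (div_le_one_of_le₀ hab (le_of_lt hb))
        (by linarith)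
    have hpos : 0 < b ^ ((n:ℝ) - i) * a ^ (i:ℝ) :=
      mul_pos (Real.rpow_pos_of_pos hb _) (Real.rpow_pos_of_pos ha _)
    nlinarith [Real.rpow_pos_of_pos (div_pos ha hb) (δ * n - i)]
  -- put it together
  set S : Finset (Fin n → F) := univ.filter (fun x => x ≠ 0 ∧ (hammingNorm x : ℝ) < δ * n)
    with hS_def
  have hcardS : (Nat.card {x : Fin n → F // x ≠ 0 ∧ (hammingNorm x : ℝ) < δ * n}) = S.card := by
    rw [Nat.card_eq_fintype_card, Fintype.card_subtype]
  rw [hcardS]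
  have hbound : (S.card : ℝ) * (q:ℝ) ^ (-(E * n)) ≤ 1 := by
    calc (S.card : ℝ) * (q:ℝ) ^ (-(E * n)) = ∑ _x ∈ S, (q:ℝ) ^ (-(E * n)) := by
          rw [Finset.sum_const, nsmul_eq_mul]
      _ ≤ ∑ x ∈ S, ∏ j, w (x j) := by
          apply Finset.sum_le_sum
          intro x hx
          rw [hS_def, Finset.mem_filter] at hx
          exact hperx x (le_of_lt hx.2.2)
      _ ≤ ∑ x : Fin n → F, ∏ j, w (x j) := by
          apply Finset.sum_le_sum_of_subset_of_nonneg (Finset.subset_univ S)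
          intro x _ _
          apply Finset.prod_nonneg
          intro j _
          simp only [hw_def]
          split <;> [exact le_of_lt hb; exact le_of_lt ha]
      _ = 1 := hsum1
  have hpos : (0:ℝ) < (q:ℝ) ^ (-(E * n)) := Real.rpow_pos_of_pos hq0 _
  rw [← le_div_iff₀ hpos] at hbound
  calc (S.card : ℝ) ≤ 1 / (q:ℝ) ^ (-(E * n)) := hbound
    _ = (q:ℝ) ^ (E * n) := by
        rw [Real.rpow_neg (le_of_lt hq0), one_div, inv_inv]

/-- **Gilbert–Varshamov bound (parity-check form).** Let `F` be a finite field with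
`q` elements (`q` is then a prime power), `δ ∈ (0, 1 − 1/q)`, `ε ∈ (0, 1 − H_q(δ))`,
`n > 0`, and `ℓ = ⌈(H_q(δ) + ε)·n⌉`. Then the number of matrices `H ∈ F^{ℓ×n}`
admitting a nonzero vector `x` with `wt(x) < δn` and `H·x = 0` is at most a
`q^{−εn}` fraction of all `q^{ℓn}` matrices; equivalently, a uniformly random `H` is a
parity-check matrix of a code of minimum distance at least `δn` with probability at
least `1 − q^{−εn}`. -/
theorem gilbert_varshamov_parity_check (F : Type) [Field F] [Fintype F] [DecidableEq F]
    (q : ℕ) (hq : q = Fintype.card F) (δ ε : ℝ)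
    (hδ : δ ∈ Set.Ioo (0 : ℝ) (1 - 1 / (q : ℝ)))
    (hε : ε ∈ Set.Ioo (0 : ℝ) (1 - qaryEntropy q δ))
    (n : ℕ) (hn : 0 < n) (ℓ : ℕ) (hℓ : ℓ = ⌈(qaryEntropy q δ + ε) * (n : ℝ)⌉₊) :
    (Nat.card {H : Matrix (Fin ℓ) (Fin n) F //
        ∃ x : Fin n → F, x ≠ 0 ∧ (hammingNorm x : ℝ) < δ * n ∧ H.mulVec x = 0} : ℝ)
      ≤ (q : ℝ) ^ (-(ε * (n : ℝ))) * (q : ℝ) ^ (ℓ * n) := by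
  classical
  have hq2 : 1 < q := hq ▸ Fintype.one_lt_card
  have hq1 : (1:ℝ) < (q:ℝ) := by exact_mod_cast hq2
  have hq0 : (0:ℝ) < (q:ℝ) := by linarith
  set E : ℝ := qaryEntropy q δ with hE_def
  set T := {x : Fin n → F // x ≠ 0 ∧ (hammingNorm x : ℝ) < δ * n} with hT_def
  -- union bound
  have hinj : Nat.card {H : Matrix (Fin ℓ) (Fin n) F //
        ∃ x : Fin n → F, x ≠ 0 ∧ (hammingNorm x : ℝ) < δ * n ∧ H.mulVec x = 0}
      ≤ Nat.card (Σ x : T, {H : Matrix (Fin ℓ) (Fin n) F // H.mulVec x.1 = 0}) := by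
    apply Nat.card_le_card_of_injective
      (f := fun H => (⟨⟨Classical.choose H.2, (Classical.choose_spec H.2).1,
          (Classical.choose_spec H.2).2.1⟩,
          ⟨H.1, (Classical.choose_spec H.2).2.2⟩⟩ :
        Σ x : T, {H' : Matrix (Fin ℓ) (Fin n) F // H'.mulVec x.1 = 0}))
    intro H1 H2 h
    apply Subtype.ext
    exact congrArg
      (fun z : (Σ x : T, {H' : Matrix (Fin ℓ) (Fin n) F // H'.mulVec x.1 = 0}) => z.2.1) h
  -- count the sigma type
  have hKx : ∀ x : T, (Fintype.card {H : Matrix (Fin ℓ) (Fin n) F // H.mulVec x.1 = 0} : ℝ)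
      = (q:ℝ) ^ (ℓ * n) / (q:ℝ) ^ ℓ := by
    intro x
    have h := GV.matrix_card F ℓ n x.1 x.2.1
    rw [← hq] at h
    have h' := congrArg (Nat.cast (R := ℝ)) h
    push_cast at h'
    rw [← Nat.card_eq_fintype_card, eq_div_iff (by positivity)]
    exact h'
  have hsigma : (Nat.card (Σ x : T, {H : Matrix (Fin ℓ) (Fin n) F // H.mulVec x.1 = 0}) : ℝ)
      = (Nat.card T : ℝ) * ((q:ℝ) ^ (ℓ * n) / (q:ℝ) ^ ℓ) := by
    rw [Nat.card_eq_fintype_card, Fintype.card_sigma, Nat.cast_sum,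
      Finset.sum_congr rfl (fun x _ => hKx x), Finset.sum_const, Finset.card_univ,
      nsmul_eq_mul, Nat.card_eq_fintype_card]
  have hvol : (Nat.card T : ℝ) ≤ (q:ℝ) ^ (E * n) :=
    GV.volume_bound F q hq δ hδ.1 hδ.2 n
  -- combine
  have hTnn : (0:ℝ) ≤ (q:ℝ) ^ (ℓ * n) / (q:ℝ) ^ ℓ := by positivity
  calc (Nat.card {H : Matrix (Fin ℓ) (Fin n) F //
        ∃ x : Fin n → F, x ≠ 0 ∧ (hammingNorm x : ℝ) < δ * n ∧ H.mulVec x = 0} : ℝ)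
      ≤ (Nat.card (Σ x : T, {H : Matrix (Fin ℓ) (Fin n) F // H.mulVec x.1 = 0}) : ℝ) := by
        exact_mod_cast hinj
    _ = (Nat.card T : ℝ) * ((q:ℝ) ^ (ℓ * n) / (q:ℝ) ^ ℓ) := hsigma
    _ ≤ (q:ℝ) ^ (E * n) * ((q:ℝ) ^ (ℓ * n) / (q:ℝ) ^ ℓ) :=
        mul_le_mul_of_nonneg_right hvol hTnn
    _ ≤ (q : ℝ) ^ (-(ε * (n : ℝ))) * (q : ℝ) ^ (ℓ * n) := by
        have hfin : (q:ℝ) ^ (E * n) / (q:ℝ) ^ ℓ ≤ (q : ℝ) ^ (-(ε * (n : ℝ))) := by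
          rw [div_le_iff₀ (by positivity)]
          have hcl : (E + ε) * n ≤ (ℓ : ℝ) := hℓ ▸ Nat.le_ceil _
          calc (q:ℝ) ^ (E * n) ≤ (q:ℝ) ^ ((ℓ:ℝ) - ε * n) := by
                apply Real.rpow_le_rpow_of_exponent_le (le_of_lt hq1)
                linarith
            _ = (q : ℝ) ^ (-(ε * (n:ℝ))) * (q:ℝ) ^ ℓ := by
                rw [← Real.rpow_natCast (q:ℝ) ℓ, ← Real.rpow_add hq0]
                congr 1; ring
        calc (q:ℝ) ^ (E * n) * ((q:ℝ) ^ (ℓ * n) / (q:ℝ) ^ ℓ)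
            = ((q:ℝ) ^ (E * n) / (q:ℝ) ^ ℓ) * (q:ℝ) ^ (ℓ * n) := by ring
          _ ≤ (q : ℝ) ^ (-(ε * (n : ℝ))) * (q : ℝ) ^ (ℓ * n) :=
              mul_le_mul_of_nonneg_right hfin (by positivity)
end

section
/- (Compression lemma.) Fix an integer k ≥ 3, a real compression factor D > 1, and a real δ with 1 − (k/2 − 1)/(Dk − 1) < δ < 1. Then there exists N such that for every integer n ≥ N, every integer m with n^{1+(Dk−1)(1−δ)} < m ≤ n^{k/2}, and t = ⌈n^δ⌉, one has t·log₂(m/t) > D·(k·t·log₂(e·n/(k·t)) + 1), and moreover 2^{k·t·log₂(e·n/(k·t)) + 1} > ∑_{s=0}^{kt} C(n,s); consequently 2^{t·log₂(m/t)} > (∑_{s=0}^{kt} C(n,s))^D. -/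
lemma aux_sum_choose_lt (n : ℕ) : ∀ d : ℕ, 3 * d ≤ n →
    ∑ s ∈ Finset.range (d + 1), n.choose s < 2 * n.choose d := by
  intro d
  induction d with
  | zero => intro _; simp
  | succ d ih =>
    intro h
    have hd : 3 * d ≤ n := by omega
    have key : 2 * n.choose d ≤ n.choose (d + 1) := by
      have h1 : n.choose (d + 1) * (d + 1) = n.choose d * (n - d) :=
        Nat.choose_succ_right_eq n d
      have h2 : 2 * (d + 1) ≤ n - d := by omega
      have h3 : 2 * n.choose d * (d + 1) ≤ n.choose (d + 1) * (d + 1) := by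
        rw [h1]
        calc 2 * n.choose d * (d + 1) = n.choose d * (2 * (d + 1)) := by ring
          _ ≤ n.choose d * (n - d) := Nat.mul_le_mul_left _ h2
      exact Nat.le_of_mul_le_mul_right h3 (by omega)
    calc ∑ s ∈ Finset.range (d + 1 + 1), n.choose s
        = (∑ s ∈ Finset.range (d + 1), n.choose s) + n.choose (d + 1) :=
          Finset.sum_range_succ _ _
      _ < 2 * n.choose d + n.choose (d + 1) := Nat.add_lt_add_right (ih hd) _
      _ ≤ n.choose (d + 1) + n.choose (d + 1) := Nat.add_le_add_right key _
      _ = 2 * n.choose (d + 1) := by ring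

lemma aux_choose_le (n d : ℕ) (hd : 0 < d) :
    (n.choose d : ℝ) ≤ (Real.exp 1 * n / d) ^ d := by
  have hdR : (0 : ℝ) < d := by exact_mod_cast hd
  have hfact : (0 : ℝ) < (d.factorial : ℝ) := by exact_mod_cast d.factorial_pos
  have h1 : (n.choose d : ℝ) ≤ (n : ℝ) ^ d / (d.factorial : ℝ) := by
    exact_mod_cast Nat.choose_le_pow_div d n
  have h2 : ((d : ℝ)) ^ d / (d.factorial : ℝ) ≤ Real.exp d := by
    refine le_trans ?_ (Real.sum_le_exp_of_nonneg (le_of_lt hdR) (d + 1))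
    have hnn : ∀ i ∈ Finset.range (d + 1), (0 : ℝ) ≤ (d : ℝ) ^ i / (i.factorial : ℝ) := by
      intro i _
      positivity
    exact Finset.single_le_sum hnn (Finset.self_mem_range_succ d)
  have h3 : ((d : ℝ)) ^ d ≤ Real.exp d * (d.factorial : ℝ) := by
    rw [div_le_iff₀ hfact] at h2; exact h2
  have hexp : Real.exp (d : ℝ) = Real.exp 1 ^ d := (Real.exp_one_pow d).symm
  have h4 : (n : ℝ) ^ d / (d.factorial : ℝ) ≤ (Real.exp 1 * n / d) ^ d := by
    rw [div_pow, mul_pow, div_le_div_iff₀ hfact (by positivity)]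
    calc (n : ℝ) ^ d * (d : ℝ) ^ d ≤ (n : ℝ) ^ d * (Real.exp d * (d.factorial : ℝ)) :=
          mul_le_mul_of_nonneg_left h3 (by positivity)
      _ = Real.exp 1 ^ d * (n : ℝ) ^ d * (d.factorial : ℝ) := by rw [hexp]; ring
  exact h1.trans h4

set_option maxHeartbeats 2000000 in
/-- **Compression lemma.** Fix an integer `k ≥ 3`, a real compression factor `D > 1`,
and a real `δ` with `1 − (k/2 − 1)/(Dk − 1) < δ < 1`. Then there exists `N` such that
for every integer `n ≥ N`, every integer `m` with `n^{1+(Dk−1)(1−δ)} < m ≤ n^{k/2}`,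
and `t = ⌈n^δ⌉`, one has
`t·log₂(m/t) > D·(k·t·log₂(e·n/(k·t)) + 1)`, moreover
`2^{k·t·log₂(e·n/(k·t)) + 1} > ∑_{s=0}^{kt} C(n,s)`, and consequently
`2^{t·log₂(m/t)} > (∑_{s=0}^{kt} C(n,s))^D`. -/
theorem compression_lemma (k : ℕ) (hk : 3 ≤ k) (D : ℝ) (hD : 1 < D) (δ : ℝ)
    (hδl : 1 - ((k : ℝ) / 2 - 1) / (D * k - 1) < δ) (hδu : δ < 1) :
    ∃ N : ℕ, ∀ n : ℕ, N ≤ n → ∀ m : ℕ,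
      (n : ℝ) ^ ((1 : ℝ) + (D * k - 1) * (1 - δ)) < (m : ℝ) →
      (m : ℝ) ≤ (n : ℝ) ^ ((k : ℝ) / 2) →
      ∀ t : ℕ, t = ⌈(n : ℝ) ^ δ⌉₊ →
        ((t : ℝ) * Real.logb 2 ((m : ℝ) / t)
            > D * ((k : ℝ) * t * Real.logb 2 (Real.exp 1 * n / ((k : ℝ) * t)) + 1))
        ∧ ((2 : ℝ) ^ ((k : ℝ) * t * Real.logb 2 (Real.exp 1 * n / ((k : ℝ) * t)) + 1)
            > ((∑ s ∈ Finset.range (k * t + 1), n.choose s : ℕ) : ℝ))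
        ∧ ((2 : ℝ) ^ ((t : ℝ) * Real.logb 2 ((m : ℝ) / t))
            > ((∑ s ∈ Finset.range (k * t + 1), n.choose s : ℕ) : ℝ) ^ D) := by
  have hkR : (3 : ℝ) ≤ (k : ℝ) := by exact_mod_cast hk
  have hkpos : (0 : ℝ) < k := by linarith
  have hD0 : (0 : ℝ) < D := by linarith
  have hDk1 : (0 : ℝ) < D * k - 1 := by nlinarith
  have hr : ((k : ℝ) / 2 - 1) / (D * k - 1) < 1 / 2 := by
    rw [div_lt_iff₀ hDk1]; nlinarith
  have hδhalf : (1 : ℝ) / 2 < δ := by linarith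
  have hδpos : (0 : ℝ) < δ := by linarith
  have h1δ : (0 : ℝ) < 1 - δ := by linarith
  have hlog2 : (0 : ℝ) < Real.log 2 := Real.log_pos one_lt_two
  have he3 : Real.exp 1 < 3 := by linarith [Real.exp_one_lt_d9]
  have hepos : (0 : ℝ) < Real.exp 1 := Real.exp_pos 1
  set L3 : ℝ := Real.logb 2 (3 / Real.exp 1) with hL3def
  have hL3 : 0 < L3 := Real.logb_pos one_lt_two ((one_lt_div hepos).2 he3)
  set C₀ : ℝ := (D + 2 / Real.log 2 + 1) / (D * k * L3) with hC0def
  have t1 : Filter.Tendsto (fun n : ℕ => (n : ℝ) ^ (1 - δ)) Filter.atTop Filter.atTop :=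
    (tendsto_rpow_atTop h1δ).comp tendsto_natCast_atTop_atTop
  have t2 : Filter.Tendsto (fun n : ℕ => (n : ℝ) ^ δ) Filter.atTop Filter.atTop :=
    (tendsto_rpow_atTop hδpos).comp tendsto_natCast_atTop_atTop
  have ev : ∀ᶠ n : ℕ in Filter.atTop,
      (6 * (k : ℝ) ≤ (n : ℝ) ^ (1 - δ) ∧ max C₀ 1 ≤ (n : ℝ) ^ δ ∧ 1 ≤ n) := by
    filter_upwards [t1.eventually_ge_atTop (6 * (k : ℝ)),
      t2.eventually_ge_atTop (max C₀ 1), Filter.eventually_ge_atTop 1] with n h1 h2 h3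
    exact ⟨h1, h2, h3⟩
  rw [Filter.eventually_atTop] at ev
  obtain ⟨N, hN⟩ := ev
  refine ⟨N, ?_⟩
  intro n hn m hm1 hm2 t ht
  obtain ⟨h6k, hC0x, hn1⟩ := hN n hn
  subst ht
  set x : ℝ := (n : ℝ) ^ δ with hxdef
  set tn : ℕ := ⌈x⌉₊ with htndef
  have hnpos : (0 : ℝ) < n := by exact_mod_cast hn1
  have hnR1 : (1 : ℝ) ≤ n := by exact_mod_cast hn1
  have hx1 : (1 : ℝ) ≤ x := Real.one_le_rpow hnR1 (le_of_lt hδpos)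
  have hxpos : (0 : ℝ) < x := by linarith
  have hC0 : C₀ ≤ x := le_trans (le_max_left _ _) hC0x
  have htx : x ≤ (tn : ℝ) := Nat.le_ceil x
  have htx2 : (tn : ℝ) ≤ x + 1 := le_of_lt (Nat.ceil_lt_add_one (le_of_lt hxpos))
  have htpos : (0 : ℝ) < tn := lt_of_lt_of_le hxpos htx
  have htnpos : 0 < tn := by exact_mod_cast htpos
  -- 3·k·tn ≤ n
  have hxn : x * (n : ℝ) ^ (1 - δ) = n := by
    rw [hxdef, ← Real.rpow_add hnpos]
    norm_num
  have hdnR : (3 : ℝ) * ((k : ℕ) * tn : ℕ) ≤ n := by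
    push_cast
    calc (3 : ℝ) * ((k : ℝ) * (tn : ℝ)) ≤ 3 * ((k : ℝ) * (x + 1)) := by
          have := mul_le_mul_of_nonneg_left htx2 (le_of_lt hkpos)
          linarith
      _ ≤ 6 * (k : ℝ) * x := by nlinarith
      _ ≤ (n : ℝ) ^ (1 - δ) * x := mul_le_mul_of_nonneg_right h6k (le_of_lt hxpos)
      _ = n := by rw [mul_comm]; exact hxn
  have hdn : 3 * (k * tn) ≤ n := by exact_mod_cast hdnR
  have hdpos : 0 < k * tn := Nat.mul_pos (by omega) htnpos
  have hdRpos : (0 : ℝ) < (k : ℝ) * tn := by positivity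
  have hy0 : (0 : ℝ) < Real.exp 1 * n / ((k : ℝ) * tn) := by positivity
  have hcast : (k : ℝ) * (tn : ℝ) = ((k * tn : ℕ) : ℝ) := by push_cast; ring
  -- Part 2
  have key2 : (2 : ℝ) ^ ((k : ℝ) * tn * Real.logb 2 (Real.exp 1 * n / ((k : ℝ) * tn)) + 1)
      = 2 * (Real.exp 1 * n / ((k : ℝ) * tn)) ^ (k * tn) := by
    have hy' : (2 : ℝ) ^ Real.logb 2 (Real.exp 1 * n / ((k : ℝ) * tn))
        = Real.exp 1 * n / ((k : ℝ) * tn) := Real.rpow_logb two_pos (by norm_num) hy0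
    calc (2 : ℝ) ^ ((k : ℝ) * tn * Real.logb 2 (Real.exp 1 * n / ((k : ℝ) * tn)) + 1)
        = (2 : ℝ) ^ (Real.logb 2 (Real.exp 1 * n / ((k : ℝ) * tn)) * ((k : ℝ) * tn)) * 2 := by
          rw [Real.rpow_add two_pos, Real.rpow_one, mul_comm ((k : ℝ) * (tn : ℝ))]
      _ = ((2 : ℝ) ^ Real.logb 2 (Real.exp 1 * n / ((k : ℝ) * tn))) ^ ((k : ℝ) * (tn : ℝ)) * 2 := by
          rw [Real.rpow_mul (by norm_num : (0 : ℝ) ≤ 2)]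
      _ = (Real.exp 1 * n / ((k : ℝ) * tn)) ^ ((k : ℝ) * (tn : ℝ)) * 2 := by rw [hy']
      _ = (Real.exp 1 * n / ((k : ℝ) * tn)) ^ (k * tn) * 2 := by
          rw [hcast, Real.rpow_natCast]
      _ = 2 * (Real.exp 1 * n / ((k : ℝ) * tn)) ^ (k * tn) := mul_comm _ _
  have part2 : (2 : ℝ) ^ ((k : ℝ) * tn * Real.logb 2 (Real.exp 1 * n / ((k : ℝ) * tn)) + 1)
      > ((∑ s ∈ Finset.range (k * tn + 1), n.choose s : ℕ) : ℝ) := by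
    rw [key2]
    have h1 : ((∑ s ∈ Finset.range (k * tn + 1), n.choose s : ℕ) : ℝ)
        < 2 * (n.choose (k * tn) : ℝ) := by
      exact_mod_cast aux_sum_choose_lt n (k * tn) hdn
    have h2 : (n.choose (k * tn) : ℝ) ≤ (Real.exp 1 * n / ((k : ℝ) * tn)) ^ (k * tn) := by
      rw [hcast]; exact aux_choose_le n (k * tn) hdpos
    linarith
  -- Part 1
  have hmpos : (0 : ℝ) < m := lt_trans (Real.rpow_pos_of_pos hnpos _) hm1
  have hlgn0 : 0 ≤ Real.logb 2 n := Real.logb_nonneg one_lt_two hnR1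
  have hlgm : (1 + (D * k - 1) * (1 - δ)) * Real.logb 2 n < Real.logb 2 m := by
    have := Real.logb_lt_logb (b := 2) one_lt_two (Real.rpow_pos_of_pos hnpos _) hm1
    rwa [Real.logb_rpow_eq_mul_logb_of_pos hnpos] at this
  have hlgx : Real.logb 2 x = δ * Real.logb 2 n := by
    rw [hxdef]; exact Real.logb_rpow_eq_mul_logb_of_pos hnpos
  have hlgT : Real.logb 2 (tn : ℝ) ≤ δ * Real.logb 2 n + x⁻¹ / Real.log 2 := by
    have hstep : Real.logb 2 (tn : ℝ) ≤ Real.logb 2 (x + 1) :=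
      Real.logb_le_logb_of_le one_lt_two htpos htx2
    have hx1e : x + 1 = x * (1 + x⁻¹) := by field_simp
    have heq : Real.logb 2 (x + 1) = Real.logb 2 x + Real.logb 2 (1 + x⁻¹) := by
      rw [hx1e, Real.logb_mul hxpos.ne' (by positivity)]
    have hlog1x : Real.logb 2 (1 + x⁻¹) ≤ x⁻¹ / Real.log 2 := by
      have h : Real.log (1 + x⁻¹) ≤ x⁻¹ := by
        have := Real.log_le_sub_one_of_pos (show (0 : ℝ) < 1 + x⁻¹ by positivity)
        linarith
      rw [Real.logb]
      exact (div_le_div_iff_of_pos_right hlog2).mpr h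
    rw [heq, hlgx] at hstep
    linarith
  have htxi : (tn : ℝ) * x⁻¹ ≤ 2 := by
    have hxi1 : x⁻¹ ≤ 1 := inv_le_one_of_one_le₀ hx1
    have hxi0 : (0 : ℝ) ≤ x⁻¹ := by positivity
    calc (tn : ℝ) * x⁻¹ ≤ (x + 1) * x⁻¹ := mul_le_mul_of_nonneg_right htx2 hxi0
      _ = 1 + x⁻¹ := by field_simp
      _ ≤ 2 := by linarith
  have h2' : (tn : ℝ) * Real.logb 2 (tn : ℝ)
      ≤ δ * ((tn : ℝ) * Real.logb 2 n) + 2 / Real.log 2 := by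
    have hmul := mul_le_mul_of_nonneg_left hlgT (le_of_lt htpos)
    have h1 : (tn : ℝ) * (x⁻¹ / Real.log 2) ≤ 2 / Real.log 2 := by
      rw [mul_div_assoc']
      gcongr
    linarith [hmul, h1]
  have h1' : (tn : ℝ) * Real.logb 2 m > (tn : ℝ) * ((1 + (D * k - 1) * (1 - δ)) * Real.logb 2 n) :=
    mul_lt_mul_of_pos_left hlgm htpos
  have hyle : Real.logb 2 (Real.exp 1 * n / ((k : ℝ) * tn))
      ≤ (1 - δ) * Real.logb 2 n + Real.logb 2 (Real.exp 1) - Real.logb 2 k := by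
    have hkx : (0 : ℝ) < (k : ℝ) * x := by positivity
    have hdge : (k : ℝ) * x ≤ (k : ℝ) * tn := mul_le_mul_of_nonneg_left htx (le_of_lt hkpos)
    have hstep : Real.logb 2 (Real.exp 1 * n / ((k : ℝ) * tn))
        ≤ Real.logb 2 (Real.exp 1 * n / ((k : ℝ) * x)) := by
      apply Real.logb_le_logb_of_le one_lt_two hy0
      gcongr
    have heq : Real.logb 2 (Real.exp 1 * n / ((k : ℝ) * x))
        = Real.logb 2 (Real.exp 1) + Real.logb 2 n - Real.logb 2 k - Real.logb 2 x := by
      rw [Real.logb_div (by positivity) (by positivity),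
        Real.logb_mul hepos.ne' hnpos.ne', Real.logb_mul hkpos.ne' hxpos.ne']
      ring
    rw [heq, hlgx] at hstep
    linarith
  have h3' : D * ((k : ℝ) * tn * Real.logb 2 (Real.exp 1 * n / ((k : ℝ) * tn)))
      ≤ D * ((k : ℝ) * tn * ((1 - δ) * Real.logb 2 n + Real.logb 2 (Real.exp 1)
        - Real.logb 2 k)) :=
    mul_le_mul_of_nonneg_left
      (mul_le_mul_of_nonneg_left hyle (le_of_lt hdRpos)) (le_of_lt hD0)
  have hC0t : C₀ ≤ (tn : ℝ) := le_trans hC0 htx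
  have hDkL3 : (0 : ℝ) < D * (k : ℝ) * L3 := by positivity
  have h5a : D + 2 / Real.log 2 + 1 ≤ (tn : ℝ) * (D * (k : ℝ) * L3) := by
    rw [hC0def, div_le_iff₀ hDkL3] at hC0t
    linarith
  have hL3le : L3 ≤ Real.logb 2 k - Real.logb 2 (Real.exp 1) := by
    rw [hL3def, Real.logb_div (by norm_num) hepos.ne']
    have h3k : Real.logb 2 (3 : ℝ) ≤ Real.logb 2 k :=
      Real.logb_le_logb_of_le one_lt_two (by norm_num) hkR
    linarith
  have h5 : D + 2 / Real.log 2 + 1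
      ≤ D * ((k : ℝ) * tn) * (Real.logb 2 k - Real.logb 2 (Real.exp 1)) := by
    calc D + 2 / Real.log 2 + 1 ≤ (tn : ℝ) * (D * (k : ℝ) * L3) := h5a
      _ ≤ (tn : ℝ) * (D * (k : ℝ) * (Real.logb 2 k - Real.logb 2 (Real.exp 1))) := by
          exact mul_le_mul_of_nonneg_left
            (mul_le_mul_of_nonneg_left hL3le (le_of_lt (mul_pos hD0 hkpos))) (le_of_lt htpos)
      _ = D * ((k : ℝ) * tn) * (Real.logb 2 k - Real.logb 2 (Real.exp 1)) := by ring
  have part1 : (tn : ℝ) * Real.logb 2 ((m : ℝ) / tn)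
      > D * ((k : ℝ) * tn * Real.logb 2 (Real.exp 1 * n / ((k : ℝ) * tn)) + 1) := by
    rw [Real.logb_div hmpos.ne' htpos.ne', mul_sub]
    linarith [h1', h2', h3', h5]
  refine ⟨part1, part2, ?_⟩
  have hDpos : 0 < D := hD0
  have e1 : (2 : ℝ) ^ ((tn : ℝ) * Real.logb 2 ((m : ℝ) / tn))
      > (2 : ℝ) ^ (D * ((k : ℝ) * tn * Real.logb 2 (Real.exp 1 * n / ((k : ℝ) * tn)) + 1)) :=
    (Real.rpow_lt_rpow_left_iff one_lt_two).2 part1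
  have e2 : (2 : ℝ) ^ (D * ((k : ℝ) * tn * Real.logb 2 (Real.exp 1 * n / ((k : ℝ) * tn)) + 1))
      = ((2 : ℝ) ^ ((k : ℝ) * tn * Real.logb 2 (Real.exp 1 * n / ((k : ℝ) * tn)) + 1)) ^ D := by
    rw [mul_comm D, Real.rpow_mul (by norm_num : (0 : ℝ) ≤ 2)]
  have e3 : ((2 : ℝ) ^ ((k : ℝ) * tn * Real.logb 2 (Real.exp 1 * n / ((k : ℝ) * tn)) + 1)) ^ D
      > ((∑ s ∈ Finset.range (k * tn + 1), n.choose s : ℕ) : ℝ) ^ D :=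
    Real.rpow_lt_rpow (Nat.cast_nonneg _) part2 hDpos
  calc ((∑ s ∈ Finset.range (k * tn + 1), n.choose s : ℕ) : ℝ) ^ D
      < ((2 : ℝ) ^ ((k : ℝ) * tn * Real.logb 2 (Real.exp 1 * n / ((k : ℝ) * tn)) + 1)) ^ D := e3
    _ = (2 : ℝ) ^ (D * ((k : ℝ) * tn * Real.logb 2 (Real.exp 1 * n / ((k : ℝ) * tn)) + 1)) := e2.symm
    _ < (2 : ℝ) ^ ((tn : ℝ) * Real.logb 2 ((m : ℝ) / tn)) := e1
end

section
/- Fix an integer k ≥ 3, a real D > 1, and a real δ with 1 − (k/2 − 1)/(Dk − 1) < δ < 1. Then there exists N such that for every integer n ≥ N, every integer m with n^{1+(Dk−1)(1−δ)} < m ≤ n^{k/2}, and t = ⌈n^δ⌉, one has 2kt < n, t·log₂(m/t) > D·k·t·log₂(2n/(kt)), and consequently (2/D)·t·log₂(m/t) > H(2kt/n)·n. -/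
/-!
For `n^δ ≤ t ≤ 2n^δ` one has `log₂(m/t) > Dk(1-δ)·log₂ n - 1` and
`log₂(2n/(kt)) ≤ (1-δ)·log₂ n + 1 - log₂ k`, so the `log₂ n` terms cancel and the displayed
inequality reduces to `Dk(log₂ k - 1) ≥ 1`, true for `k ≥ 3`, `D > 1`. The entropy bound follows
from `H(x) < x·log₂(4/x)`, a consequence of `-(1-x)·ln(1-x) ≤ x`.
-/

/-- The binary entropy function `H(x) = −x·log₂(x) − (1−x)·log₂(1−x)`. -/
noncomputable def binaryEntropy (x : ℝ) : ℝ :=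
  -x * Real.logb 2 x - (1 - x) * Real.logb 2 (1 - x)

open Real Filter

theorem binaryEntropy_lt_mul_logb_four_div {x : ℝ} (hx0 : 0 < x) (hx1 : x < 1) :
    binaryEntropy x < x * logb 2 (4 / x) := by
  have hlog2 : 1 / 2 < log 2 := by linarith [log_two_gt_d9]
  -- `-(1-x) ln(1-x) ≤ x < 2x ln 2`, as `ln 2 > 1/2`
  have hnegMulLog : -((1 - x) * log (1 - x)) < 2 * x * log 2 := by
    have := negMulLog_le_one_sub_self (x := 1 - x) (by linarith)
    rw [negMulLog] at this
    nlinarith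
  have hlogb4 : logb 2 4 = 2 := by
    rw [show (4 : ℝ) = 2 ^ (2 : ℝ) by norm_num, logb_rpow (by norm_num) (by norm_num)]
  rw [binaryEntropy, logb_div (by norm_num) hx0.ne', hlogb4, ← sub_pos]
  simp only [logb]
  have key : x * (2 - log x / log 2) - (-x * (log x / log 2) - (1 - x) * (log (1 - x) / log 2))
      = (2 * x * log 2 - -((1 - x) * log (1 - x))) / log 2 := by
    field_simp
    ring
  rw [key]
  exact div_pos (by linarith) (by linarith)

theorem binaryEntropy_div_mul_lt {a n : ℝ} (ha : 0 < a) (han : a < n) :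
    binaryEntropy (a / n) * n < a * logb 2 (4 * n / a) := by
  have hn : 0 < n := ha.trans han
  calc binaryEntropy (a / n) * n < a / n * logb 2 (4 / (a / n)) * n :=
        mul_lt_mul_of_pos_right
          (binaryEntropy_lt_mul_logb_four_div (by positivity) ((div_lt_one hn).2 han)) hn
    _ = a * logb 2 (4 * n / a) := by
        rw [div_div_eq_mul_div]
        field_simp

theorem three_halves_lt_logb_two_three : 3 / 2 < logb 2 3 := by
  rw [lt_logb_iff_rpow_lt one_lt_two (by norm_num), ← sq_lt_sq₀ (by positivity) (by norm_num),
    ← rpow_natCast, ← rpow_mul (by norm_num)]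
  norm_num

theorem one_le_mul_logb_sub_one {k D : ℝ} (hk : 3 ≤ k) (hD : 1 < D) :
    1 ≤ D * k * (logb 2 k - 1) := by
  have hlogb : 1 / 2 < logb 2 k - 1 := by
    linarith [three_halves_lt_logb_two_three.trans_le
      (logb_le_logb_of_le one_lt_two (by norm_num) hk)]
  nlinarith [mul_lt_mul_of_pos_left hlogb (by positivity : 0 < D * k)]

section

variable {n t : ℝ}

theorem logb_div_gt_of_rpow_lt {m e δ : ℝ} (hn : 0 < n) (ht : 0 < t) (htn : t ≤ 2 * n ^ δ)
    (hm : n ^ e < m) : (e - δ) * logb 2 n - 1 < logb 2 (m / t) := by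
  have hfrac : n ^ (e - δ) / 2 < m / t := by
    rw [rpow_sub hn, div_div, lt_div_iff₀ ht]
    calc n ^ e / (n ^ δ * 2) * t ≤ n ^ e / (n ^ δ * 2) * (2 * n ^ δ) := by gcongr
      _ = n ^ e := by field_simp
      _ < m := hm
  have := logb_lt_logb one_lt_two (by positivity) hfrac
  rwa [logb_div (by positivity) two_ne_zero, logb_rpow_eq_mul_logb_of_pos hn,
    logb_self_eq_one one_lt_two] at this

theorem logb_two_mul_div_le {k δ : ℝ} (hn : 0 < n) (hk : 0 < k) (hnt : n ^ δ ≤ t) :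
    logb 2 (2 * n / (k * t)) ≤ (1 - δ) * logb 2 n + 1 - logb 2 k := by
  have hfrac : 2 * n / (k * t) ≤ 2 * n ^ (1 - δ) / k := by
    rw [rpow_sub hn, rpow_one, mul_div_assoc', div_div, mul_comm (n ^ δ)]
    gcongr
  have ht : 0 < t := (rpow_pos_of_pos hn δ).trans_le hnt
  have := logb_le_logb_of_le one_lt_two (by positivity) hfrac
  rw [logb_div (by positivity) hk.ne', logb_mul two_ne_zero (by positivity),
    logb_self_eq_one one_lt_two, logb_rpow_eq_mul_logb_of_pos hn] at this
  linarith

theorem mul_logb_two_mul_div_lt {m k D δ : ℝ} (hn : 0 < n) (hk : 0 < k) (hD : 0 < D)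
    (hkD : 1 ≤ D * k * (logb 2 k - 1)) (hnt : n ^ δ ≤ t) (htn : t ≤ 2 * n ^ δ)
    (hm : n ^ (1 + (D * k - 1) * (1 - δ)) < m) :
    D * (k * t) * logb 2 (2 * n / (k * t)) < t * logb 2 (m / t) := by
  have ht : 0 < t := (rpow_pos_of_pos hn δ).trans_le hnt
  have hlower := logb_div_gt_of_rpow_lt hn ht htn hm
  calc D * (k * t) * logb 2 (2 * n / (k * t))
      ≤ D * (k * t) * ((1 - δ) * logb 2 n + 1 - logb 2 k) := by
        gcongr
        exact logb_two_mul_div_le hn hk hnt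
    _ ≤ t * ((1 + (D * k - 1) * (1 - δ) - δ) * logb 2 n - 1) := by nlinarith
    _ < t * logb 2 (m / t) := mul_lt_mul_of_pos_left hlower ht

theorem two_mul_mul_lt {k δ : ℝ} (hn : 0 < n) (hk : 0 ≤ k) (hkn : 4 * k < n ^ (1 - δ))
    (htn : t ≤ 2 * n ^ δ) : 2 * k * t < n := by
  calc 2 * k * t ≤ 4 * k * n ^ δ := by nlinarith
    _ < n ^ (1 - δ) * n ^ δ := mul_lt_mul_of_pos_right hkn (rpow_pos_of_pos hn δ)
    _ = n := by rw [← rpow_add hn, sub_add_cancel, rpow_one]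

end

/-- Fix an integer `k ≥ 3`, a real `D > 1`, and a real `δ` with
`1 − (k/2 − 1)/(Dk − 1) < δ < 1`. Then there exists `N` such that for every integer
`n ≥ N`, every integer `m` with `n^{1+(Dk−1)(1−δ)} < m ≤ n^{k/2}`, and `t = ⌈n^δ⌉`,
one has `2kt < n`, `t·log₂(m/t) > D·k·t·log₂(2n/(kt))`, and consequently
`(2/D)·t·log₂(m/t) > H(2kt/n)·n`. -/
theorem compression_entropy_bound (k : ℕ) (hk : 3 ≤ k) (D : ℝ) (hD : 1 < D) (δ : ℝ)
    (hδl : 1 - ((k : ℝ) / 2 - 1) / (D * k - 1) < δ) (hδu : δ < 1) :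
    ∃ N : ℕ, ∀ n : ℕ, N ≤ n → ∀ m : ℕ,
      (n : ℝ) ^ ((1 : ℝ) + (D * k - 1) * (1 - δ)) < (m : ℝ) →
      (m : ℝ) ≤ (n : ℝ) ^ ((k : ℝ) / 2) →
      ∀ t : ℕ, t = ⌈(n : ℝ) ^ δ⌉₊ →
        (2 * k * t < n)
        ∧ ((t : ℝ) * Real.logb 2 ((m : ℝ) / t)
            > D * ((k : ℝ) * t) * Real.logb 2 (2 * n / ((k : ℝ) * t)))
        ∧ ((2 / D) * ((t : ℝ) * Real.logb 2 ((m : ℝ) / t))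
            > binaryEntropy (2 * (k : ℝ) * t / n) * n) := by
  have hk3 : (3 : ℝ) ≤ k := by exact_mod_cast hk
  have hδ : 0 < δ := by
    have : ((k : ℝ) / 2 - 1) / (D * k - 1) < 1 := (div_lt_one (by nlinarith)).2 (by nlinarith)
    linarith
  have hlarge : ∀ᶠ n : ℕ in atTop, 4 * (k : ℝ) < (n : ℝ) ^ (1 - δ) ∧ 1 ≤ n :=
    (((tendsto_rpow_atTop (sub_pos.2 hδu)).comp tendsto_natCast_atTop_atTop).eventually_gt_atTop
      _).and (eventually_ge_atTop 1)
  obtain ⟨N, hN⟩ := eventually_atTop.1 hlarge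
  refine ⟨N, fun n hNn m hm _ t ht => ?_⟩
  obtain ⟨hkn, hn1⟩ := hN n hNn
  have hn : (0 : ℝ) < n := by exact_mod_cast hn1
  have hnδ : 1 ≤ (n : ℝ) ^ δ := one_le_rpow (by exact_mod_cast hn1) hδ.le
  have hnt : (n : ℝ) ^ δ ≤ t := ht ▸ Nat.le_ceil _
  have htn : (t : ℝ) ≤ 2 * (n : ℝ) ^ δ := ht ▸ Nat.ceil_le_two_mul (by linarith)
  have hktn : 2 * k * t < (n : ℝ) := two_mul_mul_lt hn k.cast_nonneg hkn htn
  have hdisplayed := mul_logb_two_mul_div_lt hn (by positivity) (by positivity)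
    (one_le_mul_logb_sub_one hk3 hD) hnt htn hm
  refine ⟨by exact_mod_cast hktn, hdisplayed, ?_⟩
  have hkt : 0 < 2 * (k : ℝ) * t := by nlinarith
  calc binaryEntropy (2 * k * t / n) * n < 2 * k * t * logb 2 (4 * n / (2 * k * t)) :=
        binaryEntropy_div_mul_lt hkt hktn
    _ = 2 / D * (D * (k * t) * logb 2 (2 * n / (k * t))) := by
        rw [show 4 * (n : ℝ) / (2 * k * t) = 2 * n / (k * t) by field_simp; ring]
        field_simp
    _ < 2 / D * (t * logb 2 (m / t)) := by gcongr
end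

section
/- (Noise bound for the lossy trapdoor function.) Let t, m, ℓ be positive integers with t dividing m and m/t a power of two, and write t̃ = t·log₂(m/t). Let γ ∈ (0,1), α > 0, ρ ∈ (0,1), and ε ∈ (0,1/2) satisfy ε·t ≤ γ/(α+1), ρ·ℓ ≥ t̃, and (γα/(α+1))² ≥ ρ·ln 2. Let E ∈ F_2^{ℓ×m} be a random matrix whose entries are independent Bernoulli(ε) bits. Then the probability that there exists x ∈ F_2^{t̃} with wt(E·spfy_{m,t}(x)) > γℓ is at most 2^{−t̃}. -/
/-!
Fix an input `x`. Since `v = spfy(x)` has at most `t` nonzero coordinates, a row `r` of `E`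
satisfies `r ⬝ v ≠ 0` with probability at most `t ε ≤ q := γ / (α + 1)` (union bound over the
support of `v`). The `ℓ` rows are independent, so `wt(E v)` counts successes of `ℓ` independent
trials of success probability at most `q`, and Chernoff's bound together with Hoeffding's lemma
bounds the probability that it exceeds `γ ℓ` by `exp(-2 (γ - q)² ℓ)`, where
`γ - q = γ α / (α + 1)`. The hypotheses on `ρ` make this at most `2^(-2 t̃)`, and a union bound
over the `2^t̃` inputs `x` gives `2^(-t̃)`.
-/

open Finset

/-- `binExpansion s a b` is the `a`-th bit of the `s`-bit binary expansion of
`b ∈ {0,…,2^s−1}`, viewed in `F_2`. -/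
def binExpansion (s : ℕ) (a : Fin s) (b : Fin (2 ^ s)) : ZMod 2 :=
  if Nat.testBit b.val a.val then 1 else 0

/-- The sparsification map `spfy_{m,t} : F_2^{ts} → F_2^m`, `m = t·2^s`: each block
`x_i ∈ F_2^s` of the input is replaced by the indicator vector of length `2^s` having a
single `1` at the position whose `s`-bit binary expansion is `x_i`. -/
def sparsify (t s : ℕ) (x : Fin t × Fin s → ZMod 2) :
    Fin t × Fin (2 ^ s) → ZMod 2 :=
  fun q => if ∀ a : Fin s, x (q.1, a) = binExpansion s a q.2 then 1 else 0

open MeasureTheory ProbabilityTheory Real Matrix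

theorem bernoulli_mgf_le {p : ℝ} (hp0 : 0 ≤ p) (hp1 : p ≤ 1) (lam : ℝ) :
    1 - p + p * exp lam ≤ exp (lam * p + lam ^ 2 / 8) := by
  set μ : Measure ℝ := bernoulliMeasure 1 0 ⟨p, hp0, hp1⟩
  have hsupp : ∀ᵐ x ∂μ, id x ∈ Set.Icc (0 : ℝ) 1 := by
    rw [show μ = _ from bernoulliMeasure_def _ _ _, ae_add_measure_iff]
    exact ⟨Measure.ae_smul_measure (by simp [ae_dirac_eq]) _,
      Measure.ae_smul_measure (by simp [ae_dirac_eq]) _⟩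
  have hoeffding := (hasSubgaussianMGF_of_mem_Icc aemeasurable_id hsupp).mgf_le lam
  have hmean : μ[id] = p := by simp [μ, integral_bernoulliMeasure]
  have hmgf : mgf (fun x => id x - μ[id]) μ lam = (1 - p + p * exp lam) * exp (-(lam * p)) := by
    simp only [hmean, μ, mgf, integral_bernoulliMeasure]
    simp only [id_eq, mul_sub, mul_one, exp_sub, smul_eq_mul, zero_sub, mul_neg, exp_neg]
    ring
  rw [hmgf, ← le_div_iff₀ (exp_pos _), div_eq_mul_inv, ← exp_neg, ← exp_add] at hoeffding
  refine hoeffding.trans_eq (congrArg exp ?_)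
  simp only [sub_zero, nnnorm_one]
  push_cast
  ring

section UnionBound

variable {β κ : Type*} [Fintype β] (W : β → ℝ)

theorem sum_filter_le_sum_sum_filter (hW : ∀ b, 0 ≤ W b) (P : β → Prop) [DecidablePred P]
    (Q : κ → β → Prop) [∀ k, DecidablePred (Q k)] (s : Finset κ)
    (hPQ : ∀ b, P b → ∃ k ∈ s, Q k b) :
    ∑ b ∈ univ.filter P, W b ≤ ∑ k ∈ s, ∑ b ∈ univ.filter (Q k), W b := by
  calc ∑ b ∈ univ.filter P, W b
      ≤ ∑ b ∈ univ.filter P, ∑ k ∈ s.filter (fun k => Q k b), W b := by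
        refine sum_le_sum fun b hb => ?_
        obtain ⟨k, hks, hk⟩ := hPQ b (mem_filter.1 hb).2
        exact single_le_sum (f := fun _ => W b) (fun _ _ => hW b) (mem_filter.2 ⟨hks, hk⟩)
    _ ≤ ∑ b, ∑ k ∈ s.filter (fun k => Q k b), W b :=
        sum_le_sum_of_subset_of_nonneg (filter_subset _ _)
          fun b _ _ => sum_nonneg fun _ _ => hW b
    _ = ∑ k ∈ s, ∑ b ∈ univ.filter (Q k), W b := by
        simp only [sum_filter]
        exact sum_comm

end UnionBound

section ProductWeights

variable {α ι : Type*} [Fintype α] [Fintype ι] [DecidableEq ι] (w : α → ℝ)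

theorem sum_prod_eq_one (hw : ∑ a, w a = 1) : ∑ f : ι → α, ∏ i, w (f i) = 1 := by
  rw [← Fintype.prod_sum (fun _ a => w a), hw, prod_const_one]

theorem sum_filter_prod_apply_eq (hw : ∑ a, w a = 1) (i₀ : ι) (P : α → Prop) [DecidablePred P] :
    ∑ f ∈ univ.filter (fun f : ι → α => P (f i₀)), ∏ i, w (f i) = ∑ a ∈ univ.filter P, w a := by
  set g : ι → α → ℝ := fun i a => if i = i₀ then (if P a then w a else 0) else w a
  have hterm : ∀ f : ι → α, (if P (f i₀) then ∏ i, w (f i) else 0) = ∏ i, g i (f i) := by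
    intro f
    by_cases hf : P (f i₀)
    · rw [if_pos hf]
      refine prod_congr rfl fun i _ => ?_
      by_cases hi : i = i₀
      · subst hi; simp [g, hf]
      · simp [g, hi]
    · rw [if_neg hf]
      exact (prod_eq_zero (mem_univ i₀) (by simp [g, hf])).symm
  have hrow : ∀ i, ∑ a, g i a = if i = i₀ then ∑ a ∈ univ.filter P, w a else 1 := by
    intro i
    by_cases hi : i = i₀ <;> simp [g, hi, sum_filter, hw]
  rw [sum_filter, sum_congr rfl fun f _ => hterm f, ← Fintype.prod_sum, prod_congr rfl
    fun i _ => hrow i, Fintype.prod_ite_eq']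

theorem sum_filter_lt_prod_le_exp_mul_pow (hw : ∀ a, 0 ≤ w a) (X : α → ℝ) {lam : ℝ}
    (hlam : 0 ≤ lam) (c : ℝ) :
    ∑ f ∈ univ.filter (fun f : ι → α => c < ∑ i, X (f i)), ∏ i, w (f i)
      ≤ exp (-(lam * c)) * (∑ a, w a * exp (lam * X a)) ^ Fintype.card ι := by
  have hW : ∀ f : ι → α, 0 ≤ ∏ i, w (f i) := fun f => prod_nonneg fun i _ => hw _
  calc ∑ f ∈ univ.filter (fun f : ι → α => c < ∑ i, X (f i)), ∏ i, w (f i)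
      ≤ ∑ f ∈ univ.filter (fun f : ι → α => c < ∑ i, X (f i)),
          (∏ i, w (f i)) * exp (lam * (∑ i, X (f i) - c)) := by
        refine sum_le_sum fun f hf => le_mul_of_one_le_right (hW f) (one_le_exp ?_)
        exact mul_nonneg hlam (sub_nonneg.2 (mem_filter.1 hf).2.le)
    _ ≤ ∑ f : ι → α, (∏ i, w (f i)) * exp (lam * (∑ i, X (f i) - c)) :=
        sum_le_sum_of_subset_of_nonneg (filter_subset _ _)
          fun f _ _ => mul_nonneg (hW f) (exp_pos _).le
    _ = exp (-(lam * c)) * ∑ f : ι → α, ∏ i, (w (f i) * exp (lam * X (f i))) := by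
        rw [mul_sum]
        refine sum_congr rfl fun f _ => ?_
        rw [prod_mul_distrib, ← exp_sum, mul_sub, mul_sum, sub_eq_add_neg, exp_add]
        ring
    _ = exp (-(lam * c)) * (∑ a, w a * exp (lam * X a)) ^ Fintype.card ι := by
        rw [← Fintype.prod_sum (fun _ a => w a * exp (lam * X a)), prod_const, card_univ]

theorem sum_filter_lt_card_prod_le_exp (hw0 : ∀ a, 0 ≤ w a) (hw1 : ∑ a, w a = 1)
    (A : α → Prop) [DecidablePred A] {q γ : ℝ} (hq : ∑ a ∈ univ.filter A, w a ≤ q)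
    (hqγ : q ≤ γ) :
    ∑ f ∈ univ.filter (fun f : ι → α => γ * Fintype.card ι < #{i | A (f i)}), ∏ i, w (f i)
      ≤ exp (-(2 * (γ - q) ^ 2 * Fintype.card ι)) := by
  set p := ∑ a ∈ univ.filter A, w a
  -- `lam = 4 (γ - q)` minimises the exponent `lam (q - γ) + lam ^ 2 / 8` below.
  set lam := 4 * (γ - q)
  have hlam : 0 ≤ lam := by simp only [lam]; linarith
  set X : α → ℝ := fun a => if A a then 1 else 0
  have hcount : ∀ f : ι → α, (#{i | A (f i)} : ℝ) = ∑ i, X (f i) := fun f =>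
    natCast_card_filter _ _
  have hp0 : 0 ≤ p := sum_nonneg fun a _ => hw0 a
  have hp1 : p ≤ 1 := hw1 ▸ sum_le_sum_of_subset_of_nonneg (filter_subset _ _) fun a _ _ => hw0 a
  have hmgf : ∑ a, w a * exp (lam * X a) = 1 - p + p * exp lam := by
    have hsplit : ∀ a, w a * exp (lam * X a) = w a + if A a then w a * (exp lam - 1) else 0 := by
      intro a
      by_cases ha : A a
      · simp only [X, ha, if_true, mul_one]; ring
      · simp [X, ha]
    simp only [hsplit, sum_add_distrib, hw1, ← sum_filter, ← sum_mul, p]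
    ring
  have hmgf_le : 1 - p + p * exp lam ≤ exp (lam * q + lam ^ 2 / 8) := by
    refine (bernoulli_mgf_le hp0 hp1 lam).trans (exp_le_exp.2 ?_)
    gcongr
  calc ∑ f ∈ univ.filter (fun f : ι → α => γ * Fintype.card ι < #{i | A (f i)}), ∏ i, w (f i)
      ≤ exp (-(lam * (γ * Fintype.card ι))) * (1 - p + p * exp lam) ^ Fintype.card ι := by
        simp only [hcount, ← hmgf]
        exact sum_filter_lt_prod_le_exp_mul_pow w hw0 X hlam _
    _ ≤ exp (-(lam * (γ * Fintype.card ι))) * exp (lam * q + lam ^ 2 / 8) ^ Fintype.card ι := by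
        gcongr
    _ = exp (-(2 * (γ - q) ^ 2 * Fintype.card ι)) := by
        rw [← exp_nat_mul, ← exp_add]
        congr 1
        simp only [lam]
        ring

end ProductWeights

theorem sum_filter_dotProduct_ne_zero_le {R κ : Type*} [Semiring R] [Fintype R] [DecidableEq R]
    [Fintype κ] [DecidableEq κ] (u : R → ℝ) (hu0 : ∀ b, 0 ≤ u b) (hu1 : ∑ b, u b = 1)
    (v : κ → R) :
    ∑ r ∈ univ.filter (fun r : κ → R => r ⬝ᵥ v ≠ 0), ∏ p, u (r p)
      ≤ hammingNorm v * ∑ b ∈ univ.filter (· ≠ 0), u b := by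
  have hsupp : ∀ r : κ → R, r ⬝ᵥ v ≠ 0 → ∃ p ∈ univ.filter (v · ≠ 0), r p ≠ 0 := by
    intro r hr
    by_contra! h
    refine hr (sum_eq_zero fun p _ => ?_)
    by_cases hp : v p = 0
    · simp [hp]
    · simp [h p (mem_filter.2 ⟨mem_univ p, hp⟩)]
  calc ∑ r ∈ univ.filter (fun r : κ → R => r ⬝ᵥ v ≠ 0), ∏ p, u (r p)
      ≤ ∑ p ∈ univ.filter (v · ≠ 0), ∑ r ∈ univ.filter (fun r : κ → R => r p ≠ 0), ∏ p, u (r p) :=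
        sum_filter_le_sum_sum_filter _ (fun r => prod_nonneg fun p _ => hu0 _) _ _ _ hsupp
    _ = hammingNorm v * ∑ b ∈ univ.filter (· ≠ 0), u b := by
        rw [sum_congr rfl fun p _ => sum_filter_prod_apply_eq u hu1 p (· ≠ 0), sum_const,
          nsmul_eq_mul]
        rfl

theorem binExpansion_injective (s : ℕ) :
    Function.Injective (fun b : Fin (2 ^ s) => fun a : Fin s => binExpansion s a b) := by
  intro b b' h
  refine Fin.ext (Nat.eq_of_testBit_eq fun a => ?_)
  by_cases ha : a < s
  · have := congrFun h ⟨a, ha⟩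
    simp only [binExpansion] at this
    cases hb : Nat.testBit b.val a <;> cases hb' : Nat.testBit b'.val a <;> simp_all
  · have hpow : 2 ^ s ≤ 2 ^ a := Nat.pow_le_pow_right two_pos (not_lt.1 ha)
    rw [Nat.testBit_eq_false_of_lt (b.isLt.trans_le hpow),
      Nat.testBit_eq_false_of_lt (b'.isLt.trans_le hpow)]

theorem hammingNorm_sparsify_le (t s : ℕ) (x : Fin t × Fin s → ZMod 2) :
    hammingNorm (sparsify t s x) ≤ t := by
  have hmem : ∀ q, sparsify t s x q ≠ 0 → ∀ a, x (q.1, a) = binExpansion s a q.2 := by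
    intro q hq
    by_contra h
    exact hq (if_neg h)
  calc hammingNorm (sparsify t s x) ≤ #(univ : Finset (Fin t)) := by
        refine card_le_card_of_injOn Prod.fst (fun _ _ => mem_univ _) ?_
        intro q hq q' hq' hfst
        have hq := hmem q (mem_filter.1 hq).2
        have hq' := hmem q' (mem_filter.1 hq').2
        refine Prod.ext hfst (binExpansion_injective s (funext fun a => ?_))
        change binExpansion s a q.2 = binExpansion s a q'.2
        rw [← hq, ← hq', hfst]
    _ = t := by simp

def bernoulliWeight (ε : ℝ) (b : ZMod 2) : ℝ := if b = 1 then ε else 1 - ε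

section BernoulliWeight

variable {ε : ℝ}

theorem bernoulliWeight_nonneg (hε0 : 0 ≤ ε) (hε1 : ε ≤ 1) (b : ZMod 2) :
    0 ≤ bernoulliWeight ε b := by
  unfold bernoulliWeight
  split <;> linarith

theorem sum_bernoulliWeight : ∑ b, bernoulliWeight ε b = 1 := by
  simp [bernoulliWeight, show (univ : Finset (ZMod 2)) = {0, 1} from rfl]

theorem sum_filter_ne_zero_bernoulliWeight :
    ∑ b ∈ univ.filter (· ≠ 0), bernoulliWeight ε b = ε := by
  simp [bernoulliWeight, show univ.filter (· ≠ (0 : ZMod 2)) = {1} from rfl]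

end BernoulliWeight

theorem sum_filter_lt_hammingNorm_mulVec_sparsify_le {t s ℓ : ℕ} {ε q γ : ℝ} (hε0 : 0 ≤ ε)
    (hε1 : ε ≤ 1) (htε : ε * t ≤ q) (hqγ : q ≤ γ) (x : Fin t × Fin s → ZMod 2) :
    ∑ E ∈ univ.filter (fun E : Matrix (Fin ℓ) (Fin t × Fin (2 ^ s)) (ZMod 2) =>
        γ * ℓ < hammingNorm (E *ᵥ sparsify t s x)), ∏ j, ∏ p, bernoulliWeight ε (E j p)
      ≤ exp (-(2 * (γ - q) ^ 2 * ℓ)) := by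
  have hrow : ∑ r ∈ univ.filter (fun r => r ⬝ᵥ sparsify t s x ≠ 0), ∏ p, bernoulliWeight ε (r p)
      ≤ q := by
    refine (sum_filter_dotProduct_ne_zero_le _ (bernoulliWeight_nonneg hε0 hε1)
      sum_bernoulliWeight _).trans (le_trans ?_ htε)
    rw [sum_filter_ne_zero_bernoulliWeight, mul_comm]
    exact mul_le_mul_of_nonneg_left (by exact_mod_cast hammingNorm_sparsify_le t s x) hε0
  have := sum_filter_lt_card_prod_le_exp (ι := Fin ℓ) _
    (fun r => prod_nonneg fun p _ => bernoulliWeight_nonneg hε0 hε1 (r p))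
    (sum_prod_eq_one _ sum_bernoulliWeight) _ hrow hqγ
  rwa [Fintype.card_fin] at this

theorem two_pow_mul_exp_le {n : ℕ} {c : ℝ} (h : n * log 2 ≤ c) :
    (2 : ℝ) ^ n * exp (-(2 * c)) ≤ (2 : ℝ) ^ (-(n : ℝ)) := by
  rw [← rpow_natCast, rpow_def_of_pos two_pos, rpow_def_of_pos two_pos, ← exp_add, exp_le_exp]
  linarith

open Classical in
theorem ltdf_noise_bound_general (t s ℓ : ℕ)
    (γ α ρ ε : ℝ) (hγ : γ ∈ Set.Ioo (0 : ℝ) 1) (hα : 0 < α)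
    (hε : ε ∈ Set.Ioo (0 : ℝ) (1/2))
    (h1 : ε * t ≤ γ / (α + 1)) (h2 : ρ * ℓ ≥ ((t * s : ℕ) : ℝ))
    (h3 : (γ * α / (α + 1)) ^ 2 ≥ ρ * Real.log 2) :
    (∑ E ∈ univ.filter (fun E : Fin ℓ → (Fin t × Fin (2 ^ s)) → ZMod 2 =>
        ∃ x : Fin t × Fin s → ZMod 2,
          γ * ℓ < (hammingNorm (fun j : Fin ℓ => ∑ p, E j p * sparsify t s x p) : ℝ)),
      ∏ j, ∏ p, (if E j p = 1 then ε else 1 - ε))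
    ≤ (2 : ℝ) ^ (-(((t * s : ℕ) : ℝ))) := by
  have hε1 : ε ≤ 1 := by linarith [hε.2]
  have hq : γ / (α + 1) ≤ γ := div_le_self hγ.1.le (by linarith)
  have hδ : γ - γ / (α + 1) = γ * α / (α + 1) := by field_simp; ring
  have hlog : ((t * s : ℕ) : ℝ) * log 2 ≤ (γ * α / (α + 1)) ^ 2 * ℓ := by
    nlinarith [mul_le_mul_of_nonneg_right h2 (log_nonneg one_le_two),
      mul_le_mul_of_nonneg_right h3 (Nat.cast_nonneg ℓ)]
  refine (sum_filter_le_sum_sum_filter _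
    (fun E => prod_nonneg fun j _ => prod_nonneg fun p _ => bernoulliWeight_nonneg hε.1.le hε1 _)
    _ _ univ fun E ⟨x, hx⟩ => ⟨x, mem_univ x, hx⟩).trans ?_
  refine (sum_le_sum fun x _ =>
    sum_filter_lt_hammingNorm_mulVec_sparsify_le hε.1.le hε1 h1 hq x).trans ?_
  rw [hδ, sum_const, card_univ, nsmul_eq_mul]
  simpa [ZMod.card, mul_assoc] using two_pow_mul_exp_le hlog

open Classical in
/-- **Noise bound for the lossy trapdoor function.** Let `t, m, ℓ` be positive integers
with `t ∣ m` and `m/t = 2^s` a power of two (we identify `F_2^m` with functions on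
`Fin t × Fin 2^s`), and write `t̃ = t·log₂(m/t) = t·s`. Let `γ ∈ (0,1)`, `α > 0`,
`ρ ∈ (0,1)`, `ε ∈ (0,1/2)` satisfy `ε·t ≤ γ/(α+1)`, `ρ·ℓ ≥ t̃`, and
`(γα/(α+1))² ≥ ρ·ln 2`. Let `E ∈ F_2^{ℓ×m}` be a random matrix of independent
Bernoulli(`ε`) entries (formalized via product weights). Then the probability that
there exists `x ∈ F_2^{t̃}` with `wt(E·spfy_{m,t}(x)) > γℓ` is at most `2^{−t̃}`. -/
theorem ltdf_noise_bound (t s ℓ : ℕ) (ht : 0 < t) (hs : 0 < s) (hℓ : 0 < ℓ)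
    (γ α ρ ε : ℝ) (hγ : γ ∈ Set.Ioo (0 : ℝ) 1) (hα : 0 < α)
    (hρ : ρ ∈ Set.Ioo (0 : ℝ) 1) (hε : ε ∈ Set.Ioo (0 : ℝ) (1/2))
    (h1 : ε * t ≤ γ / (α + 1)) (h2 : ρ * ℓ ≥ ((t * s : ℕ) : ℝ))
    (h3 : (γ * α / (α + 1)) ^ 2 ≥ ρ * Real.log 2) :
    (∑ E ∈ univ.filter (fun E : Fin ℓ → (Fin t × Fin (2 ^ s)) → ZMod 2 =>
        ∃ x : Fin t × Fin s → ZMod 2,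
          γ * ℓ < (hammingNorm (fun j : Fin ℓ => ∑ p, E j p * sparsify t s x p) : ℝ)),
      ∏ j, ∏ p, (if E j p = 1 then ε else 1 - ε))
    ≤ (2 : ℝ) ^ (-(((t * s : ℕ) : ℝ))) :=
  ltdf_noise_bound_general t s ℓ γ α ρ ε hγ hα hε h1 h2 h3
end
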